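/- arXiv:1601.06447 — 2 statements merged into one kernel-verified Lean document; each statement's English description precedes it below -/
import Mathlib

section
/- Let μ be a σ-finite measure on a measurable space Y; for ℓ = 1,…,K let f₀^ℓ, f₁^ℓ : Y → [0,∞) be measurable probability densities with respect to μ that are strictly positive μ-a.e.; let C_ℓ > 0 and μ₀, μ₁ > 0, and set φ(x) = min{μ₁ x, μ₀(1−x)} for x ∈ [0,1]. For a bounded measurable G : [0,1] → ℝ define the Bellman operator (B G)(x) = min{ φ(x), min_{1≤ℓ≤K} [ C_ℓ + ∫_Y ((1−x)f₀^ℓ(y) + x f₁^ℓ(y)) · G( x f₁^ℓ(y) / ((1−x)f₀^ℓ(y) + x f₁^ℓ(y)) ) dμ(y) ] }. Define G₀ = φ and G_{n+1} = B Gₙ. Then for every n ≥ 0: Gₙ is concave on [0,1]; 0 ≤ Gₙ(x) ≤ φ(x) for all x ∈ [0,1]; and G_{n+1}(x) ≤ Gₙ(x) for all x ∈ [0,1]. -/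
/-
The iterates stay in the class of concave `G` on `[0,1]` with `0 ≤ G ≤ φ`, which the Bellman
operator maps into itself. The key point is that for `f₀, f₁ ≥ 0` the integrand
`x ↦ w(x) G(x f₁ / w(x))`, `w(x) = (1 - x) f₀ + x f₁`, is the perspective of `G` composed with
an affine map, hence concave; integrating in `y`, adding `C ℓ` and taking minima keep concavity.
The bound `G ≤ φ ≤ μ₁ x` makes the integrand dominated by `μ₁ x f₁`, hence integrable.
Monotonicity in `n` then follows by induction from `G₁ ≤ φ = G₀`, the Bellman operator being
monotone.
-/

open Set MeasureTheory

noncomputable section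

/-- For density values `f₀ = f₀(y)`, `f₁ = f₁(y)` and prior `x` of `H₁`, `mixture` is the marginal
density of the observation and `posterior` the Bayes update of `x` (junk value `0` when the
mixture vanishes). -/
def mixture (f₀ f₁ x : ℝ) : ℝ := (1 - x) * f₀ + x * f₁

def posterior (f₀ f₁ x : ℝ) : ℝ := x * f₁ / mixture f₀ f₁ x

section Posterior

variable {f₀ f₁ x : ℝ}

lemma mixture_nonneg (h₀ : 0 ≤ f₀) (h₁ : 0 ≤ f₁) (hx : x ∈ Icc (0 : ℝ) 1) :
    0 ≤ mixture f₀ f₁ x :=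
  add_nonneg (mul_nonneg (sub_nonneg.2 hx.2) h₀) (mul_nonneg hx.1 h₁)

lemma mul_le_mixture (h₀ : 0 ≤ f₀) (hx : x ≤ 1) : x * f₁ ≤ mixture f₀ f₁ x := by
  unfold mixture
  nlinarith [mul_nonneg (sub_nonneg.2 hx) h₀]

lemma mixture_mul_posterior (h₀ : 0 ≤ f₀) (h₁ : 0 ≤ f₁) (hx : x ∈ Icc (0 : ℝ) 1) :
    mixture f₀ f₁ x * posterior f₀ f₁ x = x * f₁ := by
  rcases (mixture_nonneg h₀ h₁ hx).eq_or_lt with h | h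
  · have : x * f₁ = 0 :=
      le_antisymm (h ▸ mul_le_mixture h₀ hx.2) (mul_nonneg hx.1 h₁)
    rw [← h, zero_mul, this]
  · exact mul_div_cancel₀ _ h.ne'

lemma posterior_mem_Icc (h₀ : 0 ≤ f₀) (h₁ : 0 ≤ f₁) (hx : x ∈ Icc (0 : ℝ) 1) :
    posterior f₀ f₁ x ∈ Icc (0 : ℝ) 1 :=
  ⟨div_nonneg (mul_nonneg hx.1 h₁) (mixture_nonneg h₀ h₁ hx),
    div_le_one_of_le₀ (mul_le_mixture h₀ hx.2) (mixture_nonneg h₀ h₁ hx)⟩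

lemma mixture_add {a b t s : ℝ} (hts : t + s = 1) :
    mixture f₀ f₁ (t * a + s * b) = t * mixture f₀ f₁ a + s * mixture f₀ f₁ b := by
  unfold mixture
  linear_combination (-f₀) * hts

theorem ConcaveOn.mixture_mul_comp_posterior {G : ℝ → ℝ} (hG : ConcaveOn ℝ (Icc 0 1) G)
    (h₀ : 0 ≤ f₀) (h₁ : 0 ≤ f₁) :
    ConcaveOn ℝ (Icc 0 1) fun x => mixture f₀ f₁ x * G (posterior f₀ f₁ x) := by
  refine ⟨convex_Icc 0 1, fun a ha b hb t s ht hs hts => ?_⟩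
  simp only [smul_eq_mul]
  have hx : t * a + s * b ∈ Icc (0 : ℝ) 1 := convex_Icc 0 1 ha hb ht hs hts
  have hwa := mul_nonneg ht (mixture_nonneg h₀ h₁ ha)
  have hwb := mul_nonneg hs (mixture_nonneg h₀ h₁ hb)
  have hw := mixture_add (f₀ := f₀) (f₁ := f₁) (a := a) (b := b) hts
  set wa := mixture f₀ f₁ a
  set wb := mixture f₀ f₁ b
  set w := mixture f₀ f₁ (t * a + s * b)
  rcases (show 0 ≤ w from mixture_nonneg h₀ h₁ hx).eq_or_lt with hw0 | hwpos
  · have hta : t * wa = 0 := by linarith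
    have hsb : s * wb = 0 := by linarith
    rw [← hw0, zero_mul, ← mul_assoc, ← mul_assoc, hta, hsb]
    simp
  have hweights : t * wa / w + s * wb / w = 1 := by
    rw [← add_div, ← hw, div_self hwpos.ne']
  have hcomb : t * wa / w * posterior f₀ f₁ a + s * wb / w * posterior f₀ f₁ b =
      posterior f₀ f₁ (t * a + s * b) := by
    calc t * wa / w * posterior f₀ f₁ a + s * wb / w * posterior f₀ f₁ b
        = (t * (wa * posterior f₀ f₁ a) + s * (wb * posterior f₀ f₁ b)) / w := by ring
      _ = (t * a + s * b) * f₁ / w := by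
        rw [mixture_mul_posterior h₀ h₁ ha, mixture_mul_posterior h₀ h₁ hb]
        ring
  calc t * (wa * G (posterior f₀ f₁ a)) + s * (wb * G (posterior f₀ f₁ b))
      = w * (t * wa / w * G (posterior f₀ f₁ a) + s * wb / w * G (posterior f₀ f₁ b)) := by
        field_simp
    _ ≤ w * G (posterior f₀ f₁ (t * a + s * b)) := by
        rw [← hcomb]
        exact mul_le_mul_of_nonneg_left (hG.2 (posterior_mem_Icc h₀ h₁ ha)
          (posterior_mem_Icc h₀ h₁ hb) (div_nonneg hwa hwpos.le) (div_nonneg hwb hwpos.le)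
          hweights) hwpos.le

end Posterior

lemma concaveOn_min_mul_mul_one_sub (μ₀ μ₁ : ℝ) {s : Set ℝ} (hs : Convex ℝ s) :
    ConcaveOn ℝ s fun x => min (μ₁ * x) (μ₀ * (1 - x)) := by
  refine ConcaveOn.inf ⟨hs, fun a _ b _ p q _ _ hpq => ?_⟩ ⟨hs, fun a _ b _ p q _ _ hpq => ?_⟩
  · simp only [smul_eq_mul]
    exact le_of_eq (by ring)
  · simp only [smul_eq_mul]
    exact le_of_eq (by linear_combination μ₀ * hpq)

lemma min_mul_mul_one_sub_nonneg {μ₀ μ₁ x : ℝ} (hμ₀ : 0 ≤ μ₀) (hμ₁ : 0 ≤ μ₁)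
    (hx : x ∈ Icc (0 : ℝ) 1) : 0 ≤ min (μ₁ * x) (μ₀ * (1 - x)) :=
  le_min (mul_nonneg hμ₁ hx.1) (mul_nonneg hμ₀ (sub_nonneg.2 hx.2))

theorem ConcaveOn.finset_inf' {E ι : Type*} [AddCommMonoid E] [Module ℝ E] {S : Set E}
    {s : Finset ι} (hs : s.Nonempty) {F : ι → E → ℝ} (hS : Convex ℝ S)
    (hF : ∀ i ∈ s, ConcaveOn ℝ S (F i)) :
    ConcaveOn ℝ S fun x => s.inf' hs fun i => F i x := by
  refine ⟨hS, fun a ha b hb p q hp hq hpq => Finset.le_inf' _ _ fun i hi => ?_⟩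
  calc p • s.inf' hs (fun j => F j a) + q • s.inf' hs (fun j => F j b)
      ≤ p • F i a + q • F i b := by gcongr <;> exact Finset.inf'_le _ hi
    _ ≤ F i (p • a + q • b) := (hF i hi).2 ha hb hp hq hpq

theorem ConcaveOn.measurable_domRestrict_Icc {G : ℝ → ℝ} {a b : ℝ}
    (hG : ConcaveOn ℝ (Icc a b) G) : Measurable ((Icc a b).domRestrict G) := by
  have hcont : ContinuousOn ((Icc a b).domRestrict G) {u | (u : ℝ) ∈ Ioo a b} := by
    have := hG.continuousOn_interior
    rw [interior_Icc] at this
    exact this.comp continuous_subtype_val.continuousOn fun u hu => hu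
  refine hcont.measurable_of_countable_compl ?_
  have hends : {u : Icc a b | (u : ℝ) ∈ Ioo a b}ᶜ = Subtype.val ⁻¹' {a, b} := by
    ext ⟨u, hu⟩
    simp only [mem_compl_iff, mem_ofPred_eq, mem_Ioo, mem_preimage, mem_insert_iff,
      mem_singleton_iff]
    grind
  rw [hends]
  exact ((countable_singleton b).insert a).preimage Subtype.val_injective

theorem concaveOn_integral {Y E : Type*} [MeasurableSpace Y] {μ : Measure Y} [AddCommMonoid E]
    [Module ℝ E] {S : Set E} {F : E → Y → ℝ} (hS : Convex ℝ S)
    (hF : ∀ y, ConcaveOn ℝ S fun x => F x y) (hint : ∀ x ∈ S, Integrable (F x) μ) :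
    ConcaveOn ℝ S fun x => ∫ y, F x y ∂μ := by
  refine ⟨hS, fun a ha b hb t s ht hs hts => ?_⟩
  simp only [smul_eq_mul]
  rw [← integral_const_mul, ← integral_const_mul,
    ← integral_add ((hint a ha).const_mul t) ((hint b hb).const_mul s)]
  refine integral_mono (((hint a ha).const_mul t).add ((hint b hb).const_mul s))
    (hint _ (hS ha hb ht hs hts)) fun y => ?_
  simpa only [smul_eq_mul] using (hF y).2 ha hb ht hs hts

section ContinuationCost

variable {Y : Type*} [MeasurableSpace Y] {μ : Measure Y} {f₀ f₁ : Y → ℝ} {G G' : ℝ → ℝ} {x : ℝ}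

def continuationCost (μ : Measure Y) (f₀ f₁ : Y → ℝ) (G : ℝ → ℝ) (x : ℝ) : ℝ :=
  ∫ y, mixture (f₀ y) (f₁ y) x * G (posterior (f₀ y) (f₁ y) x) ∂μ

lemma integrable_mixture_mul_comp_posterior (hm₀ : Measurable f₀) (hm₁ : Measurable f₁)
    (h₀ : ∀ y, 0 ≤ f₀ y) (h₁ : ∀ y, 0 ≤ f₁ y) (hint₁ : Integrable f₁ μ)
    (hGm : Measurable ((Icc 0 1).domRestrict G)) {c : ℝ} (hGc : ∀ u ∈ Icc (0 : ℝ) 1, |G u| ≤ c * u)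
    (hx : x ∈ Icc (0 : ℝ) 1) :
    Integrable (fun y => mixture (f₀ y) (f₁ y) x * G (posterior (f₀ y) (f₁ y) x)) μ := by
  have hmix : Measurable fun y => mixture (f₀ y) (f₁ y) x :=
    (measurable_const.mul hm₀).add (measurable_const.mul hm₁)
  have hpost : Measurable fun y => posterior (f₀ y) (f₁ y) x :=
    (measurable_const.mul hm₁).div hmix
  have hGpost : Measurable fun y => G (posterior (f₀ y) (f₁ y) x) :=
    hGm.comp (hpost.subtype_mk (h := fun y => posterior_mem_Icc (h₀ y) (h₁ y) hx))
  refine (hint₁.const_mul (c * x)).mono' (hmix.mul hGpost).aestronglyMeasurable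
    (ae_of_all _ fun y => ?_)
  calc ‖mixture (f₀ y) (f₁ y) x * G (posterior (f₀ y) (f₁ y) x)‖
      = mixture (f₀ y) (f₁ y) x * |G (posterior (f₀ y) (f₁ y) x)| := by
        rw [Real.norm_eq_abs, abs_mul, abs_of_nonneg (mixture_nonneg (h₀ y) (h₁ y) hx)]
    _ ≤ mixture (f₀ y) (f₁ y) x * (c * posterior (f₀ y) (f₁ y) x) :=
        mul_le_mul_of_nonneg_left (hGc _ (posterior_mem_Icc (h₀ y) (h₁ y) hx))
          (mixture_nonneg (h₀ y) (h₁ y) hx)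
    _ = c * x * f₁ y := by
        rw [mul_left_comm, mixture_mul_posterior (h₀ y) (h₁ y) hx, mul_assoc]

lemma continuationCost_nonneg (h₀ : ∀ y, 0 ≤ f₀ y) (h₁ : ∀ y, 0 ≤ f₁ y)
    (hG : ∀ u ∈ Icc (0 : ℝ) 1, 0 ≤ G u) (hx : x ∈ Icc (0 : ℝ) 1) :
    0 ≤ continuationCost μ f₀ f₁ G x :=
  integral_nonneg fun y => mul_nonneg (mixture_nonneg (h₀ y) (h₁ y) hx)
    (hG _ (posterior_mem_Icc (h₀ y) (h₁ y) hx))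

lemma continuationCost_mono (h₀ : ∀ y, 0 ≤ f₀ y) (h₁ : ∀ y, 0 ≤ f₁ y)
    (hG : ∀ u ∈ Icc (0 : ℝ) 1, 0 ≤ G u) (hGG' : ∀ u ∈ Icc (0 : ℝ) 1, G u ≤ G' u)
    (hint : Integrable (fun y => mixture (f₀ y) (f₁ y) x * G' (posterior (f₀ y) (f₁ y) x)) μ)
    (hx : x ∈ Icc (0 : ℝ) 1) :
    continuationCost μ f₀ f₁ G x ≤ continuationCost μ f₀ f₁ G' x := by
  refine integral_mono_of_nonneg (ae_of_all _ fun y => ?_) hint (ae_of_all _ fun y => ?_)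
  · exact mul_nonneg (mixture_nonneg (h₀ y) (h₁ y) hx)
      (hG _ (posterior_mem_Icc (h₀ y) (h₁ y) hx))
  · exact mul_le_mul_of_nonneg_left (hGG' _ (posterior_mem_Icc (h₀ y) (h₁ y) hx))
      (mixture_nonneg (h₀ y) (h₁ y) hx)

end ContinuationCost

section Bellman

variable {Y ι : Type*} [MeasurableSpace Y] {μ : Measure Y} {s : Finset ι}
  {f₀ f₁ : ι → Y → ℝ} {C : ι → ℝ} {φ G G' : ℝ → ℝ} {x : ℝ}

def bellman (μ : Measure Y) (f₀ f₁ : ι → Y → ℝ) (C : ι → ℝ) (φ : ℝ → ℝ) (hs : s.Nonempty)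
    (G : ℝ → ℝ) (x : ℝ) : ℝ :=
  min (φ x) (s.inf' hs fun ℓ => C ℓ + continuationCost μ (f₀ ℓ) (f₁ ℓ) G x)

lemma bellman_le (hs : s.Nonempty) : bellman μ f₀ f₁ C φ hs G x ≤ φ x :=
  min_le_left _ _

lemma bellman_nonneg (hs : s.Nonempty) (h₀ : ∀ ℓ y, 0 ≤ f₀ ℓ y) (h₁ : ∀ ℓ y, 0 ≤ f₁ ℓ y)
    (hC : ∀ ℓ, 0 ≤ C ℓ) (hφ : 0 ≤ φ x) (hG : ∀ u ∈ Icc (0 : ℝ) 1, 0 ≤ G u)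
    (hx : x ∈ Icc (0 : ℝ) 1) :
    0 ≤ bellman μ f₀ f₁ C φ hs G x :=
  le_min hφ <| Finset.le_inf' _ _ fun ℓ _ =>
    add_nonneg (hC ℓ) (continuationCost_nonneg (h₀ ℓ) (h₁ ℓ) hG hx)

lemma bellman_mono (hs : s.Nonempty) (hm₀ : ∀ ℓ, Measurable (f₀ ℓ))
    (hm₁ : ∀ ℓ, Measurable (f₁ ℓ)) (h₀ : ∀ ℓ y, 0 ≤ f₀ ℓ y) (h₁ : ∀ ℓ y, 0 ≤ f₁ ℓ y)
    (hint₁ : ∀ ℓ, Integrable (f₁ ℓ) μ) (hG : ∀ u ∈ Icc (0 : ℝ) 1, 0 ≤ G u)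
    (hGG' : ∀ u ∈ Icc (0 : ℝ) 1, G u ≤ G' u) (hG'm : Measurable ((Icc 0 1).domRestrict G'))
    {c : ℝ} (hG'c : ∀ u ∈ Icc (0 : ℝ) 1, |G' u| ≤ c * u) (hx : x ∈ Icc (0 : ℝ) 1) :
    bellman μ f₀ f₁ C φ hs G x ≤ bellman μ f₀ f₁ C φ hs G' x :=
  min_le_min le_rfl <| Finset.inf'_mono_fun fun ℓ _ => add_le_add_right
    (continuationCost_mono (h₀ ℓ) (h₁ ℓ) hG hGG'
      (integrable_mixture_mul_comp_posterior (hm₀ ℓ) (hm₁ ℓ) (h₀ ℓ) (h₁ ℓ) (hint₁ ℓ) hG'm hG'c hx)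
      hx) _

theorem ConcaveOn.bellman (hs : s.Nonempty) (hm₀ : ∀ ℓ, Measurable (f₀ ℓ))
    (hm₁ : ∀ ℓ, Measurable (f₁ ℓ)) (h₀ : ∀ ℓ y, 0 ≤ f₀ ℓ y) (h₁ : ∀ ℓ y, 0 ≤ f₁ ℓ y)
    (hint₁ : ∀ ℓ, Integrable (f₁ ℓ) μ) (hG : ConcaveOn ℝ (Icc 0 1) G)
    (hφ : ConcaveOn ℝ (Icc 0 1) φ) {c : ℝ} (hGc : ∀ u ∈ Icc (0 : ℝ) 1, |G u| ≤ c * u) :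
    ConcaveOn ℝ (Icc 0 1) (bellman μ f₀ f₁ C φ hs G) :=
  hφ.inf <| ConcaveOn.finset_inf' hs (convex_Icc 0 1) fun ℓ _ =>
    (concaveOn_const (C ℓ) (convex_Icc 0 1)).add <|
      concaveOn_integral (convex_Icc 0 1)
        (fun y => hG.mixture_mul_comp_posterior (h₀ ℓ y) (h₁ ℓ y)) fun _ hx =>
          integrable_mixture_mul_comp_posterior (hm₀ ℓ) (hm₁ ℓ) (h₀ ℓ) (h₁ ℓ) (hint₁ ℓ)
            hG.measurable_domRestrict_Icc hGc hx

end Bellman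

end

theorem bellman_iterates_concave_monotone_general
    {Y : Type*} [MeasurableSpace Y] (μ : Measure Y)
    (K : ℕ) (hK : 0 < K)
    (f₀ f₁ : Fin K → Y → ℝ)
    (hm0 : ∀ ℓ, Measurable (f₀ ℓ)) (hm1 : ∀ ℓ, Measurable (f₁ ℓ))
    (h0nn : ∀ ℓ y, 0 ≤ f₀ ℓ y) (h1nn : ∀ ℓ y, 0 ≤ f₁ ℓ y)
    (h1int : ∀ ℓ, ∫ y, f₁ ℓ y ∂μ = 1)
    (C : Fin K → ℝ) (hC : ∀ ℓ, 0 < C ℓ)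
    (μ₀ μ₁ : ℝ) (hμ₀ : 0 < μ₀) (hμ₁ : 0 < μ₁)
    (φ : ℝ → ℝ) (hφ : ∀ x, φ x = min (μ₁ * x) (μ₀ * (1 - x)))
    (Gseq : ℕ → ℝ → ℝ)
    (hG0 : ∀ x, Gseq 0 x = φ x)
    (hGsucc : ∀ n x, Gseq (n + 1) x = min (φ x)
      (Finset.univ.inf' (Finset.univ_nonempty_iff.mpr (Fin.pos_iff_nonempty.mp hK))
        (fun ℓ => C ℓ + ∫ y, ((1 - x) * f₀ ℓ y + x * f₁ ℓ y) *
          Gseq n (x * f₁ ℓ y / ((1 - x) * f₀ ℓ y + x * f₁ ℓ y)) ∂μ))) :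
    ∀ n : ℕ,
      ConcaveOn ℝ (Icc (0:ℝ) 1) (Gseq n) ∧
      (∀ x ∈ Icc (0:ℝ) 1, 0 ≤ Gseq n x ∧ Gseq n x ≤ φ x) ∧
      (∀ x ∈ Icc (0:ℝ) 1, Gseq (n + 1) x ≤ Gseq n x) := by
  have hstep : ∀ n, Gseq (n + 1) = bellman μ f₀ f₁ C φ _ (Gseq n) := fun n => funext (hGsucc n)
  have hint₁ : ∀ ℓ, Integrable (f₁ ℓ) μ := fun ℓ => .of_integral_ne_zero (by simp [h1int])
  have hφ_concave : ConcaveOn ℝ (Icc 0 1) φ := by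
    simpa only [← funext hφ] using concaveOn_min_mul_mul_one_sub μ₀ μ₁ (convex_Icc 0 1)
  have hφ_nonneg : ∀ x ∈ Icc (0 : ℝ) 1, 0 ≤ φ x := fun x hx => by
    rw [hφ]; exact min_mul_mul_one_sub_nonneg hμ₀.le hμ₁.le hx
  have habs : ∀ G : ℝ → ℝ, (∀ u ∈ Icc (0 : ℝ) 1, 0 ≤ G u ∧ G u ≤ φ u) →
      ∀ u ∈ Icc (0 : ℝ) 1, |G u| ≤ μ₁ * u := fun G hG u hu => by
    rw [abs_of_nonneg (hG u hu).1]
    exact (hG u hu).2.trans ((hφ u).trans_le (min_le_left _ _))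
  have hinv : ∀ n, ConcaveOn ℝ (Icc (0:ℝ) 1) (Gseq n) ∧
      ∀ x ∈ Icc (0:ℝ) 1, 0 ≤ Gseq n x ∧ Gseq n x ≤ φ x := by
    intro n
    induction n with
    | zero =>
      rw [show Gseq 0 = φ from funext hG0]
      exact ⟨hφ_concave, fun x hx => ⟨hφ_nonneg x hx, le_rfl⟩⟩
    | succ n ih =>
      rw [hstep]
      exact ⟨ih.1.bellman _ hm0 hm1 h0nn h1nn hint₁ hφ_concave (habs _ ih.2), fun x hx =>
        ⟨bellman_nonneg _ h0nn h1nn (fun ℓ => (hC ℓ).le) (hφ_nonneg x hx)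
          (fun u hu => (ih.2 u hu).1) hx, bellman_le _⟩⟩
  refine fun n => ⟨(hinv n).1, (hinv n).2, ?_⟩
  induction n with
  | zero =>
    intro x _
    rw [hstep 0, hG0]
    exact bellman_le _
  | succ n ih =>
    intro x hx
    rw [hstep (n + 1), congrFun (hstep n) x]
    exact bellman_mono _ hm0 hm1 h0nn h1nn hint₁ (fun u hu => ((hinv (n + 1)).2 u hu).1) ih
      (hinv n).1.measurable_domRestrict_Icc (habs _ (hinv n).2) hx

/-- The iterates of the Bellman operator for the usage-constrained sequential test
are concave, sandwiched between `0` and the stopping cost `φ`, and pointwise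
nonincreasing in the horizon. -/
theorem bellman_iterates_concave_monotone
    {Y : Type*} [MeasurableSpace Y] (μ : Measure Y) [SigmaFinite μ]
    (K : ℕ) (hK : 0 < K)
    (f₀ f₁ : Fin K → Y → ℝ)
    (hm0 : ∀ ℓ, Measurable (f₀ ℓ)) (hm1 : ∀ ℓ, Measurable (f₁ ℓ))
    (h0nn : ∀ ℓ y, 0 ≤ f₀ ℓ y) (h1nn : ∀ ℓ y, 0 ≤ f₁ ℓ y)
    (h0int : ∀ ℓ, ∫ y, f₀ ℓ y ∂μ = 1) (h1int : ∀ ℓ, ∫ y, f₁ ℓ y ∂μ = 1)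
    (h0pos : ∀ ℓ, ∀ᵐ y ∂μ, 0 < f₀ ℓ y) (h1pos : ∀ ℓ, ∀ᵐ y ∂μ, 0 < f₁ ℓ y)
    (C : Fin K → ℝ) (hC : ∀ ℓ, 0 < C ℓ)
    (μ₀ μ₁ : ℝ) (hμ₀ : 0 < μ₀) (hμ₁ : 0 < μ₁)
    (φ : ℝ → ℝ) (hφ : ∀ x, φ x = min (μ₁ * x) (μ₀ * (1 - x)))
    (Gseq : ℕ → ℝ → ℝ)
    (hG0 : ∀ x, Gseq 0 x = φ x)
    (hGsucc : ∀ n x, Gseq (n + 1) x = min (φ x)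
      (Finset.univ.inf' (Finset.univ_nonempty_iff.mpr (Fin.pos_iff_nonempty.mp hK))
        (fun ℓ => C ℓ + ∫ y, ((1 - x) * f₀ ℓ y + x * f₁ ℓ y) *
          Gseq n (x * f₁ ℓ y / ((1 - x) * f₀ ℓ y + x * f₁ ℓ y)) ∂μ))) :
    ∀ n : ℕ,
      ConcaveOn ℝ (Icc (0:ℝ) 1) (Gseq n) ∧
      (∀ x ∈ Icc (0:ℝ) 1, 0 ≤ Gseq n x ∧ Gseq n x ≤ φ x) ∧
      (∀ x ∈ Icc (0:ℝ) 1, Gseq (n + 1) x ≤ Gseq n x) :=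
  bellman_iterates_concave_monotone_general μ K hK f₀ f₁ hm0 hm1 h0nn h1nn h1int C hC μ₀ μ₁ hμ₀ hμ₁
    φ hφ Gseq hG0 hGsucc
end

section
/- In the setting of the Bellman operator B of the preceding statement (densities f₀^ℓ, f₁^ℓ strictly positive μ-a.e., costs C_ℓ > 0, multipliers μ₀, μ₁ > 0, φ(x) = min{μ₁x, μ₀(1−x)}, G₀ = φ, G_{n+1} = B Gₙ), the pointwise limit G_∞(x) = lim_{n→∞} Gₙ(x) exists for every x ∈ [0,1], G_∞ is concave on [0,1], and G_∞ satisfies the Bellman equation G_∞(x) = min{ φ(x), min_{1≤ℓ≤K} [ C_ℓ + ∫_Y ((1−x)f₀^ℓ(y) + x f₁^ℓ(y)) · G_∞( x f₁^ℓ(y) / ((1−x)f₀^ℓ(y) + x f₁^ℓ(y)) ) dμ(y) ] } for all x ∈ [0,1]. -/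
/-!
The iterates stay in the class of measurable functions that are concave on `[0, 1]` with values
in `[0, μ₁]`. Concavity survives a Bellman step because `x ↦ ((1 - x) a + x b) G (x b / ((1 - x) a
+ x b))` is the perspective `(s, t) ↦ t G (s / t)` of `G` along an affine line, and integrating,
adding constants and taking minima preserve concavity. Since `G₁ ≤ φ = G₀` and the Bellman
operator is monotone, the iterates decrease, hence converge to their infimum, which is concave as
a pointwise limit of concave functions. The integrands are dominated by
`μ₁ ((1 - x) f₀ + x f₁)`, so dominated convergence passes the limit through the operator.
-/

open Set MeasureTheory Filter Topology

lemma ConcaveOn.of_tendsto {ι E : Type*} [AddCommMonoid E] [Module ℝ E] {s : Set E}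
    {l : Filter ι} [l.NeBot] {F : ι → E → ℝ} {G : E → ℝ} (hF : ∀ n, ConcaveOn ℝ s (F n))
    (hlim : ∀ x ∈ s, Tendsto (F · x) l (𝓝 (G x))) : ConcaveOn ℝ s G := by
  have hs : Convex ℝ s := (hF (Filter.nonempty_of_neBot l).some).1
  refine ⟨hs, fun x hx y hy a b ha hb hab => ?_⟩
  exact le_of_tendsto_of_tendsto' (((hlim x hx).const_smul a).add ((hlim y hy).const_smul b))
    (hlim _ (hs hx hy ha hb hab)) fun n => (hF n).2 hx hy ha hb hab

lemma div_mem_Icc_zero_one {s t : ℝ} (hs : 0 ≤ s) (hst : s ≤ t) : s / t ∈ Icc (0:ℝ) 1 :=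
  ⟨div_nonneg hs (hs.trans hst), div_le_one_of_le₀ hst (hs.trans hst)⟩

-- The perspective `(s, t) ↦ t G (s / t)` is concave and positively homogeneous, hence
-- superadditive: no normalisation `θ + κ = 1` is needed.
lemma ConcaveOn.add_perspective_le {G : ℝ → ℝ} (hG : ConcaveOn ℝ (Icc (0:ℝ) 1) G)
    {sx tx sy ty θ κ : ℝ} (hsx : 0 ≤ sx) (hsxt : sx ≤ tx) (hsy : 0 ≤ sy) (hsyt : sy ≤ ty)
    (hθ : 0 ≤ θ) (hκ : 0 ≤ κ) :
    θ * (tx * G (sx / tx)) + κ * (ty * G (sy / ty)) ≤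
      (θ * tx + κ * ty) * G ((θ * sx + κ * sy) / (θ * tx + κ * ty)) := by
  have hwx : 0 ≤ θ * tx := mul_nonneg hθ (hsx.trans hsxt)
  have hwy : 0 ≤ κ * ty := mul_nonneg hκ (hsy.trans hsyt)
  generalize hTdef : θ * tx + κ * ty = T
  rcases (hTdef ▸ add_nonneg hwx hwy : 0 ≤ T).eq_or_lt with hT | hT
  · obtain ⟨hx0, hy0⟩ := (add_eq_zero_iff_of_nonneg hwx hwy).1 (hTdef.trans hT.symm)
    rw [← hT, zero_mul, ← mul_assoc, ← mul_assoc, hx0, hy0]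
    simp
  have hcomb : θ * tx / T * (sx / tx) + κ * ty / T * (sy / ty) = (θ * sx + κ * sy) / T := by
    have ex : tx * (sx / tx) = sx :=
      mul_div_cancel_of_imp' fun h => le_antisymm (h ▸ hsxt) hsx
    have ey : ty * (sy / ty) = sy :=
      mul_div_cancel_of_imp' fun h => le_antisymm (h ▸ hsyt) hsy
    rw [div_mul_eq_mul_div, div_mul_eq_mul_div, mul_assoc, mul_assoc, ex, ey, add_div]
  have hsum : θ * tx / T + κ * ty / T = 1 := by rw [← add_div, hTdef, div_self hT.ne']
  have key := hG.2 (div_mem_Icc_zero_one hsx hsxt) (div_mem_Icc_zero_one hsy hsyt)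
    (div_nonneg hwx hT.le) (div_nonneg hwy hT.le) hsum
  rw [smul_eq_mul, smul_eq_mul, smul_eq_mul, smul_eq_mul, hcomb] at key
  calc θ * (tx * G (sx / tx)) + κ * (ty * G (sy / ty))
      = T * (θ * tx / T * G (sx / tx) + κ * ty / T * G (sy / ty)) := by
        field_simp [hT.ne']
    _ ≤ T * G ((θ * sx + κ * sy) / T) := mul_le_mul_of_nonneg_left key hT.le

section Perspective

-- `(1 - x) a + x b` is the predictive density of an observation with likelihoods `a`, `b` under
-- the prior `x`, and `x b / ((1 - x) a + x b)` is the posterior.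
noncomputable def bayesPerspective (a b : ℝ) (G : ℝ → ℝ) (x : ℝ) : ℝ :=
  ((1 - x) * a + x * b) * G (x * b / ((1 - x) * a + x * b))

variable {a b : ℝ} {G : ℝ → ℝ} {x : ℝ}

lemma posterior_mem_Icc_s5 (ha : 0 ≤ a) (hb : 0 ≤ b) (hx : x ∈ Icc (0:ℝ) 1) :
    x * b / ((1 - x) * a + x * b) ∈ Icc (0:ℝ) 1 :=
  div_mem_Icc_zero_one (mul_nonneg hx.1 hb)
    (le_add_of_nonneg_left (mul_nonneg (sub_nonneg.2 hx.2) ha))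

lemma mixture_nonneg_s5 (ha : 0 ≤ a) (hb : 0 ≤ b) (hx : x ∈ Icc (0:ℝ) 1) :
    0 ≤ (1 - x) * a + x * b :=
  add_nonneg (mul_nonneg (sub_nonneg.2 hx.2) ha) (mul_nonneg hx.1 hb)

lemma bayesPerspective_nonneg (ha : 0 ≤ a) (hb : 0 ≤ b) (hG : ∀ p ∈ Icc (0:ℝ) 1, 0 ≤ G p)
    (hx : x ∈ Icc (0:ℝ) 1) : 0 ≤ bayesPerspective a b G x :=
  mul_nonneg (mixture_nonneg_s5 ha hb hx) (hG _ (posterior_mem_Icc_s5 ha hb hx))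

lemma abs_bayesPerspective_le {M : ℝ} (ha : 0 ≤ a) (hb : 0 ≤ b)
    (hG : ∀ p ∈ Icc (0:ℝ) 1, |G p| ≤ M) (hx : x ∈ Icc (0:ℝ) 1) :
    |bayesPerspective a b G x| ≤ M * ((1 - x) * a + x * b) := by
  rw [bayesPerspective, abs_mul, abs_of_nonneg (mixture_nonneg_s5 ha hb hx), mul_comm M]
  exact mul_le_mul_of_nonneg_left (hG _ (posterior_mem_Icc_s5 ha hb hx)) (mixture_nonneg_s5 ha hb hx)

lemma bayesPerspective_mono {H : ℝ → ℝ} (ha : 0 ≤ a) (hb : 0 ≤ b)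
    (hGH : ∀ p ∈ Icc (0:ℝ) 1, G p ≤ H p) (hx : x ∈ Icc (0:ℝ) 1) :
    bayesPerspective a b G x ≤ bayesPerspective a b H x :=
  mul_le_mul_of_nonneg_left (hGH _ (posterior_mem_Icc_s5 ha hb hx)) (mixture_nonneg_s5 ha hb hx)

lemma concaveOn_bayesPerspective (hG : ConcaveOn ℝ (Icc (0:ℝ) 1) G) (ha : 0 ≤ a)
    (hb : 0 ≤ b) :
    ConcaveOn ℝ (Icc (0:ℝ) 1) (bayesPerspective a b G) := by
  refine ⟨convex_Icc 0 1, fun x hx y hy θ κ hθ hκ hθκ => ?_⟩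
  have hw : (1 - (θ * x + κ * y)) * a + (θ * x + κ * y) * b
      = θ * ((1 - x) * a + x * b) + κ * ((1 - y) * a + y * b) := by
    linear_combination (-a) * hθκ
  have hs : (θ * x + κ * y) * b = θ * (x * b) + κ * (y * b) := by ring
  simp only [smul_eq_mul, bayesPerspective]
  rw [hw, hs]
  exact hG.add_perspective_le (mul_nonneg hx.1 hb)
    (le_add_of_nonneg_left (mul_nonneg (sub_nonneg.2 hx.2) ha)) (mul_nonneg hy.1 hb)
    (le_add_of_nonneg_left (mul_nonneg (sub_nonneg.2 hy.2) ha)) hθ hκ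

end Perspective

section ContinuationValue

variable {Y : Type*} [MeasurableSpace Y] {μ : Measure Y} {f₀ f₁ : Y → ℝ} {G H : ℝ → ℝ}
  {M x : ℝ}

noncomputable def continuationValue (μ : Measure Y) (f₀ f₁ : Y → ℝ) (G : ℝ → ℝ) (x : ℝ) : ℝ :=
  ∫ y, bayesPerspective (f₀ y) (f₁ y) G x ∂μ

lemma measurable_bayesPerspective_uncurry (hm0 : Measurable f₀) (hm1 : Measurable f₁)
    (hG : Measurable G) :
    Measurable fun p : ℝ × Y => bayesPerspective (f₀ p.2) (f₁ p.2) G p.1 := by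
  unfold bayesPerspective
  fun_prop

structure IsLikelihoodPair (μ : Measure Y) (f₀ f₁ : Y → ℝ) : Prop where
  measurable₀ : Measurable f₀
  measurable₁ : Measurable f₁
  nonneg₀ : ∀ y, 0 ≤ f₀ y
  nonneg₁ : ∀ y, 0 ≤ f₁ y
  integrable₀ : Integrable f₀ μ
  integrable₁ : Integrable f₁ μ

namespace IsLikelihoodPair

lemma integrable_bayesPerspective (hf : IsLikelihoodPair μ f₀ f₁) (hG : Measurable G)
    (hGM : ∀ p ∈ Icc (0:ℝ) 1, |G p| ≤ M) (hx : x ∈ Icc (0:ℝ) 1) :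
    Integrable (fun y => bayesPerspective (f₀ y) (f₁ y) G x) μ :=
  .mono' (((hf.integrable₀.const_mul (1 - x)).add (hf.integrable₁.const_mul x)).const_mul M)
    ((measurable_bayesPerspective_uncurry hf.measurable₀ hf.measurable₁ hG).comp
      measurable_prodMk_left).aestronglyMeasurable
    (.of_forall fun y => abs_bayesPerspective_le (hf.nonneg₀ y) (hf.nonneg₁ y) hGM hx)

lemma measurable_continuationValue [SFinite μ] (hf : IsLikelihoodPair μ f₀ f₁)
    (hG : Measurable G) :
    Measurable (continuationValue μ f₀ f₁ G) :=
  (measurable_bayesPerspective_uncurry hf.measurable₀ hf.measurable₁ hG).stronglyMeasurable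
    |>.integral_prod_right'.measurable

lemma continuationValue_nonneg (hf : IsLikelihoodPair μ f₀ f₁)
    (hG : ∀ p ∈ Icc (0:ℝ) 1, 0 ≤ G p) (hx : x ∈ Icc (0:ℝ) 1) :
    0 ≤ continuationValue μ f₀ f₁ G x :=
  integral_nonneg fun y => bayesPerspective_nonneg (hf.nonneg₀ y) (hf.nonneg₁ y) hG hx

lemma continuationValue_mono (hf : IsLikelihoodPair μ f₀ f₁)
    (hG : Measurable G) (hGM : ∀ p ∈ Icc (0:ℝ) 1, |G p| ≤ M)
    (hH : Measurable H) (hHM : ∀ p ∈ Icc (0:ℝ) 1, |H p| ≤ M)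
    (hGH : ∀ p ∈ Icc (0:ℝ) 1, G p ≤ H p) (hx : x ∈ Icc (0:ℝ) 1) :
    continuationValue μ f₀ f₁ G x ≤ continuationValue μ f₀ f₁ H x :=
  integral_mono (hf.integrable_bayesPerspective hG hGM hx)
    (hf.integrable_bayesPerspective hH hHM hx) fun y =>
      bayesPerspective_mono (hf.nonneg₀ y) (hf.nonneg₁ y) hGH hx

lemma concaveOn_continuationValue (hf : IsLikelihoodPair μ f₀ f₁) (hG : Measurable G)
    (hGM : ∀ p ∈ Icc (0:ℝ) 1, |G p| ≤ M) (hGc : ConcaveOn ℝ (Icc (0:ℝ) 1) G) :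
    ConcaveOn ℝ (Icc (0:ℝ) 1) (continuationValue μ f₀ f₁ G) := by
  refine ⟨convex_Icc 0 1, fun x hx x' hx' θ κ hθ hκ hθκ => ?_⟩
  have hint := fun {z} (hz : z ∈ Icc (0:ℝ) 1) => hf.integrable_bayesPerspective hG hGM hz
  simp only [continuationValue, smul_eq_mul]
  rw [← integral_const_mul, ← integral_const_mul, ← integral_add ((hint hx).const_mul θ)
    ((hint hx').const_mul κ)]
  refine integral_mono (((hint hx).const_mul θ).add ((hint hx').const_mul κ))
    (hint ((convex_Icc 0 1) hx hx' hθ hκ hθκ)) fun y => ?_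
  exact (concaveOn_bayesPerspective hGc (hf.nonneg₀ y) (hf.nonneg₁ y)).2 hx hx' hθ hκ hθκ

lemma tendsto_continuationValue (hf : IsLikelihoodPair μ f₀ f₁) {Gs : ℕ → ℝ → ℝ}
    (hGs : ∀ n, Measurable (Gs n)) (hGsM : ∀ n, ∀ p ∈ Icc (0:ℝ) 1, |Gs n p| ≤ M)
    (hlim : ∀ p ∈ Icc (0:ℝ) 1, Tendsto (Gs · p) atTop (𝓝 (G p))) (hx : x ∈ Icc (0:ℝ) 1) :
    Tendsto (fun n => continuationValue μ f₀ f₁ (Gs n) x) atTop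
      (𝓝 (continuationValue μ f₀ f₁ G x)) := by
  refine tendsto_integral_of_dominated_convergence
    (fun y => M * ((1 - x) * f₀ y + x * f₁ y))
    (fun n => (hf.integrable_bayesPerspective (hGs n) (hGsM n) hx).aestronglyMeasurable)
    (((hf.integrable₀.const_mul (1 - x)).add (hf.integrable₁.const_mul x)).const_mul M)
    (fun n => .of_forall fun y =>
      abs_bayesPerspective_le (hf.nonneg₀ y) (hf.nonneg₁ y) (hGsM n) hx)
    (.of_forall fun y => ?_)
  exact (hlim _ (posterior_mem_Icc_s5 (hf.nonneg₀ y) (hf.nonneg₁ y) hx)).const_mul _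

end IsLikelihoodPair

end ContinuationValue

section BellmanOperator

variable {Y ι : Type*} [MeasurableSpace Y] {μ : Measure Y} {s : Finset ι} {hs : s.Nonempty}
  {f₀ f₁ : ι → Y → ℝ} {C : ι → ℝ} {φ G H : ℝ → ℝ} {M x : ℝ}

noncomputable def bellmanOp (μ : Measure Y) (s : Finset ι) (hs : s.Nonempty) (f₀ f₁ : ι → Y → ℝ)
    (C : ι → ℝ) (φ G : ℝ → ℝ) (x : ℝ) : ℝ :=
  min (φ x) (s.inf' hs fun ℓ => C ℓ + continuationValue μ (f₀ ℓ) (f₁ ℓ) G x)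

lemma bellmanOp_eq_inf : bellmanOp μ s hs f₀ f₁ C φ G =
    φ ⊓ s.inf' hs fun ℓ => (fun _ => C ℓ) + continuationValue μ (f₀ ℓ) (f₁ ℓ) G := by
  ext x
  simp only [bellmanOp, Pi.inf_apply, Finset.inf'_apply, Pi.add_apply]

structure IsBoundedConcave (M : ℝ) (G : ℝ → ℝ) : Prop where
  measurable : Measurable G
  concaveOn : ConcaveOn ℝ (Icc (0:ℝ) 1) G
  nonneg : ∀ p ∈ Icc (0:ℝ) 1, 0 ≤ G p
  le : ∀ p ∈ Icc (0:ℝ) 1, G p ≤ M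

lemma IsBoundedConcave.abs_le (hG : IsBoundedConcave M G) : ∀ p ∈ Icc (0:ℝ) 1, |G p| ≤ M :=
  fun p hp => (abs_of_nonneg (hG.nonneg p hp)).symm ▸ hG.le p hp

lemma IsBoundedConcave.bellmanOp [SFinite μ] (hG : IsBoundedConcave M G)
    (hf : ∀ ℓ ∈ s, IsLikelihoodPair μ (f₀ ℓ) (f₁ ℓ)) (hC : ∀ ℓ ∈ s, 0 ≤ C ℓ)
    (hφ : IsBoundedConcave M φ) :
    IsBoundedConcave M (bellmanOp μ s hs f₀ f₁ C φ G) where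
  measurable := by
    rw [bellmanOp_eq_inf]
    exact hφ.measurable.inf <| Finset.inf'_induction hs _ (fun _ h _ h' => h.inf h')
      fun ℓ hℓ => measurable_const.add ((hf ℓ hℓ).measurable_continuationValue hG.measurable)
  concaveOn := by
    rw [bellmanOp_eq_inf]
    exact hφ.concaveOn.inf <| Finset.inf'_induction hs _ (fun _ h _ h' => h.inf h')
      fun ℓ hℓ => (concaveOn_const _ (convex_Icc 0 1)).add
        ((hf ℓ hℓ).concaveOn_continuationValue hG.measurable hG.abs_le hG.concaveOn)
  nonneg p hp := le_min (hφ.nonneg p hp) <| Finset.le_inf' hs _ fun ℓ hℓ =>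
    add_nonneg (hC ℓ hℓ) ((hf ℓ hℓ).continuationValue_nonneg hG.nonneg hp)
  le p hp := (min_le_left _ _).trans (hφ.le p hp)

lemma bellmanOp_mono (hf : ∀ ℓ ∈ s, IsLikelihoodPair μ (f₀ ℓ) (f₁ ℓ))
    (hG : Measurable G) (hGM : ∀ p ∈ Icc (0:ℝ) 1, |G p| ≤ M)
    (hH : Measurable H) (hHM : ∀ p ∈ Icc (0:ℝ) 1, |H p| ≤ M)
    (hGH : ∀ p ∈ Icc (0:ℝ) 1, G p ≤ H p) (hx : x ∈ Icc (0:ℝ) 1) :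
    bellmanOp μ s hs f₀ f₁ C φ G x ≤ bellmanOp μ s hs f₀ f₁ C φ H x :=
  min_le_min_left _ <| Finset.inf'_mono_fun fun ℓ hℓ => add_le_add_right
    ((hf ℓ hℓ).continuationValue_mono hG hGM hH hHM hGH hx) _

lemma tendsto_bellmanOp (hf : ∀ ℓ ∈ s, IsLikelihoodPair μ (f₀ ℓ) (f₁ ℓ)) {Gs : ℕ → ℝ → ℝ}
    (hGs : ∀ n, Measurable (Gs n)) (hGsM : ∀ n, ∀ p ∈ Icc (0:ℝ) 1, |Gs n p| ≤ M)
    (hlim : ∀ p ∈ Icc (0:ℝ) 1, Tendsto (Gs · p) atTop (𝓝 (G p))) (hx : x ∈ Icc (0:ℝ) 1) :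
    Tendsto (fun n => bellmanOp μ s hs f₀ f₁ C φ (Gs n) x) atTop
      (𝓝 (bellmanOp μ s hs f₀ f₁ C φ G x)) :=
  tendsto_const_nhds.min <| Tendsto.finset_inf'_nhds_apply hs fun ℓ hℓ =>
    tendsto_const_nhds.add ((hf ℓ hℓ).tendsto_continuationValue hGs hGsM hlim hx)

end BellmanOperator

lemma isBoundedConcave_min_mul {μ₀ μ₁ : ℝ} (hμ₀ : 0 ≤ μ₀) (hμ₁ : 0 ≤ μ₁) :
    IsBoundedConcave μ₁ fun x => min (μ₁ * x) (μ₀ * (1 - x)) where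
  measurable := by fun_prop
  concaveOn := ((concaveOn_id (convex_Icc 0 1)).smul hμ₁).inf
    (((concaveOn_const 1 (convex_Icc 0 1)).sub (convexOn_id (convex_Icc 0 1))).smul hμ₀)
  nonneg p hp := le_min (mul_nonneg hμ₁ hp.1) (mul_nonneg hμ₀ (sub_nonneg.2 hp.2))
  le p hp := (min_le_left _ _).trans (mul_le_of_le_one_right hμ₁ hp.2)

theorem bellman_iterates_limit_fixed_point_general
    {Y : Type*} [MeasurableSpace Y] (μ : Measure Y) [SigmaFinite μ]
    (K : ℕ) (hK : 0 < K)
    (f₀ f₁ : Fin K → Y → ℝ)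
    (hm0 : ∀ ℓ, Measurable (f₀ ℓ)) (hm1 : ∀ ℓ, Measurable (f₁ ℓ))
    (h0nn : ∀ ℓ y, 0 ≤ f₀ ℓ y) (h1nn : ∀ ℓ y, 0 ≤ f₁ ℓ y)
    (h0int : ∀ ℓ, ∫ y, f₀ ℓ y ∂μ = 1) (h1int : ∀ ℓ, ∫ y, f₁ ℓ y ∂μ = 1)
    (C : Fin K → ℝ) (hC : ∀ ℓ, 0 < C ℓ)
    (μ₀ μ₁ : ℝ) (hμ₀ : 0 < μ₀) (hμ₁ : 0 < μ₁)
    (φ : ℝ → ℝ) (hφ : ∀ x, φ x = min (μ₁ * x) (μ₀ * (1 - x)))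
    (Gseq : ℕ → ℝ → ℝ)
    (hG0 : ∀ x, Gseq 0 x = φ x)
    (hGsucc : ∀ n x, Gseq (n + 1) x = min (φ x)
      (Finset.univ.inf' (Finset.univ_nonempty_iff.mpr (Fin.pos_iff_nonempty.mp hK))
        (fun ℓ => C ℓ + ∫ y, ((1 - x) * f₀ ℓ y + x * f₁ ℓ y) *
          Gseq n (x * f₁ ℓ y / ((1 - x) * f₀ ℓ y + x * f₁ ℓ y)) ∂μ))) :
    ∃ Ginf : ℝ → ℝ,
      (∀ x ∈ Icc (0:ℝ) 1, Tendsto (fun n => Gseq n x) atTop (nhds (Ginf x))) ∧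
      ConcaveOn ℝ (Icc (0:ℝ) 1) Ginf ∧
      (∀ x ∈ Icc (0:ℝ) 1, Ginf x = min (φ x)
        (Finset.univ.inf' (Finset.univ_nonempty_iff.mpr (Fin.pos_iff_nonempty.mp hK))
          (fun ℓ => C ℓ + ∫ y, ((1 - x) * f₀ ℓ y + x * f₁ ℓ y) *
            Ginf (x * f₁ ℓ y / ((1 - x) * f₀ ℓ y + x * f₁ ℓ y)) ∂μ))) := by
  have hne : (Finset.univ : Finset (Fin K)).Nonempty :=
    Finset.univ_nonempty_iff.mpr (Fin.pos_iff_nonempty.mp hK)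
  have hstep : ∀ n x, Gseq (n + 1) x = bellmanOp μ Finset.univ hne f₀ f₁ C φ (Gseq n) x := hGsucc
  have hf : ∀ ℓ ∈ Finset.univ, IsLikelihoodPair μ (f₀ ℓ) (f₁ ℓ) := fun ℓ _ =>
    ⟨hm0 ℓ, hm1 ℓ, h0nn ℓ, h1nn ℓ, .of_integral_ne_zero (by simp [h0int ℓ]),
      .of_integral_ne_zero (by simp [h1int ℓ])⟩
  have hφb : IsBoundedConcave μ₁ φ := funext hφ ▸ isBoundedConcave_min_mul hμ₀.le hμ₁.le
  have hGb : ∀ n, IsBoundedConcave μ₁ (Gseq n) := by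
    intro n
    induction n with
    | zero => exact funext hG0 ▸ hφb
    | succ n ih => exact funext (hstep n) ▸ ih.bellmanOp hf (fun ℓ _ => (hC ℓ).le) hφb
  have hanti : ∀ n, ∀ x ∈ Icc (0:ℝ) 1, Gseq (n + 1) x ≤ Gseq n x := by
    intro n
    induction n with
    | zero =>
      intro x _
      rw [hstep 0 x, hG0 x]
      exact min_le_left _ _
    | succ n ih =>
      intro x hx
      rw [hstep (n + 1) x, hstep n x]
      exact bellmanOp_mono hf (hGb _).measurable (hGb _).abs_le (hGb _).measurable
        (hGb _).abs_le ih hx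
  have hlim : ∀ x ∈ Icc (0:ℝ) 1, Tendsto (Gseq · x) atTop (𝓝 (⨅ n, Gseq n x)) :=
    fun x hx => tendsto_atTop_ciInf (antitone_nat_of_succ_le fun n => hanti n x hx)
      ⟨0, by rintro _ ⟨n, rfl⟩; exact (hGb n).nonneg x hx⟩
  refine ⟨fun x => ⨅ n, Gseq n x, hlim, .of_tendsto (fun n => (hGb n).concaveOn) hlim,
    fun x hx => tendsto_nhds_unique ((hlim x hx).comp (tendsto_add_atTop_nat 1)) ?_⟩
  exact (tendsto_bellmanOp hf (fun n => (hGb n).measurable) (fun n => (hGb n).abs_le) hlim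
    hx).congr fun n => (hstep n x).symm

/-- Lemma 5 / equation (35) of the paper: the finite-horizon value functions
converge pointwise to a concave limit that satisfies the stationary Bellman
equation of the infinite-horizon Bayesian problem. -/
theorem bellman_iterates_limit_fixed_point
    {Y : Type*} [MeasurableSpace Y] (μ : Measure Y) [SigmaFinite μ]
    (K : ℕ) (hK : 0 < K)
    (f₀ f₁ : Fin K → Y → ℝ)
    (hm0 : ∀ ℓ, Measurable (f₀ ℓ)) (hm1 : ∀ ℓ, Measurable (f₁ ℓ))
    (h0nn : ∀ ℓ y, 0 ≤ f₀ ℓ y) (h1nn : ∀ ℓ y, 0 ≤ f₁ ℓ y)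
    (h0int : ∀ ℓ, ∫ y, f₀ ℓ y ∂μ = 1) (h1int : ∀ ℓ, ∫ y, f₁ ℓ y ∂μ = 1)
    (h0pos : ∀ ℓ, ∀ᵐ y ∂μ, 0 < f₀ ℓ y) (h1pos : ∀ ℓ, ∀ᵐ y ∂μ, 0 < f₁ ℓ y)
    (C : Fin K → ℝ) (hC : ∀ ℓ, 0 < C ℓ)
    (μ₀ μ₁ : ℝ) (hμ₀ : 0 < μ₀) (hμ₁ : 0 < μ₁)
    (φ : ℝ → ℝ) (hφ : ∀ x, φ x = min (μ₁ * x) (μ₀ * (1 - x)))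
    (Gseq : ℕ → ℝ → ℝ)
    (hG0 : ∀ x, Gseq 0 x = φ x)
    (hGsucc : ∀ n x, Gseq (n + 1) x = min (φ x)
      (Finset.univ.inf' (Finset.univ_nonempty_iff.mpr (Fin.pos_iff_nonempty.mp hK))
        (fun ℓ => C ℓ + ∫ y, ((1 - x) * f₀ ℓ y + x * f₁ ℓ y) *
          Gseq n (x * f₁ ℓ y / ((1 - x) * f₀ ℓ y + x * f₁ ℓ y)) ∂μ))) :
    ∃ Ginf : ℝ → ℝ,
      (∀ x ∈ Icc (0:ℝ) 1, Tendsto (fun n => Gseq n x) atTop (nhds (Ginf x))) ∧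
      ConcaveOn ℝ (Icc (0:ℝ) 1) Ginf ∧
      (∀ x ∈ Icc (0:ℝ) 1, Ginf x = min (φ x)
        (Finset.univ.inf' (Finset.univ_nonempty_iff.mpr (Fin.pos_iff_nonempty.mp hK))
          (fun ℓ => C ℓ + ∫ y, ((1 - x) * f₀ ℓ y + x * f₁ ℓ y) *
            Ginf (x * f₁ ℓ y / ((1 - x) * f₀ ℓ y + x * f₁ ℓ y)) ∂μ))) :=
  bellman_iterates_limit_fixed_point_general μ K hK f₀ f₁ hm0 hm1 h0nn h1nn h0int h1int C hC μ₀ μ₁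
    hμ₀ hμ₁ φ hφ Gseq hG0 hGsucc
end
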